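/- Let p be an odd prime, (a_1,…,a_{p−1}) a strongly carefree tuple with m = ∏_{i=1}^{p−1} a_i^i > 1, K = ℚ(α) with α the real p-th root of m, γ_j = α^j / ∏_{i=1}^{p−1} a_i^{⌊ij/p⌋}, and suppose p² divides m^{p−1} − 1 with ε an integer satisfying εm ≡ 1 (mod p²). Set ν = (1/p)·(m + ∑_{i=1}^{p−1} ε^{i−1} α^i) and ν′ = (1/p)·(m² + ∑_{i=1}^{p−1} ε^{2(i−1)} γ_1^{2i}). Then, summing over all p field embeddings σ : K → ℂ: (a) ∑_σ σ(ν)·conj(σ(ν)) = ν′; (b) ∑_σ σ(ν) = m; and (c) for each 2 ≤ j ≤ p−1, ∑_σ σ(ν)·conj(σ(γ_j)) = ε^{j−1}·γ_j·γ_1^j. -/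

import Mathlib

open Finset

/-- A tuple `(a 1, …, a (p-1))` of positive integers is *strongly carefree* if each `a i`
is squarefree and the `a i` are pairwise coprime. -/
def StronglyCarefree (p : ℕ) (a : ℕ → ℕ) : Prop :=
  (∀ i ∈ Finset.Icc 1 (p - 1), 0 < a i ∧ Squarefree (a i)) ∧
  (∀ i ∈ Finset.Icc 1 (p - 1), ∀ j ∈ Finset.Icc 1 (p - 1), i ≠ j → Nat.Coprime (a i) (a j))

open Polynomial IntermediateField ComplexConjugate

/-! Some prime occurs in `m = ∏ aᵢ^i` to an exponent `i` with `0 < i < p`, so `m` is not a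
`p`-th power and `X^p - m` is irreducible. Hence the `p` embeddings of `K = ℚ(α)` into `ℂ` are
`σ_k : α ↦ ζ^k α`, and by orthogonality of the characters `k ↦ ζ^(ik)` the Hermitian form
`(x, y) ↦ ∑_σ σ(x) conj(σ(y))` is diagonal in the basis `1, α, …, α^(p-1)`, with
`α^i ↦ p α^(2i)` on the diagonal (`α` is real). The three identities are then read off from the
coordinates of `ν` and of `γ_j = α^j / b_j`. -/

theorem Rat.pow_ne_natCast_of_not_dvd_factorization {p m q : ℕ} (hp : 0 < p)
    (h : ¬ p ∣ m.factorization q) (b : ℚ) : b ^ p ≠ m := by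
  intro hb
  obtain ⟨n, rfl⟩ : ∃ n : ℤ, (n : ℚ) = b :=
    IsIntegrallyClosed.exists_algebraMap_eq_of_isIntegral_pow hp
      (hb ▸ (map_natCast (algebraMap ℤ ℚ) m) ▸ isIntegral_algebraMap)
  have hn : n.natAbs ^ p = m := by
    rw [← Int.natAbs_pow, show n ^ p = m by exact_mod_cast hb, Int.natAbs_natCast]
  exact h ⟨_, by rw [← hn, Nat.factorization_pow, Finsupp.smul_apply, smul_eq_mul]⟩

namespace StronglyCarefree

variable {p : ℕ} {a : ℕ → ℕ}

theorem factorization_prod_pow (ha : StronglyCarefree p a) {i q : ℕ} (hi : i ∈ Icc 1 (p - 1))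
    (hq : q.Prime) (hqa : q ∣ a i) : (∏ j ∈ Icc 1 (p - 1), a j ^ j).factorization q = i := by
  have ha0 : ∀ j ∈ Icc 1 (p - 1), a j ≠ 0 := fun j hj => (ha.1 j hj).1.ne'
  rw [Nat.factorization_prod fun j hj => pow_ne_zero _ (ha0 j hj), Finsupp.finsetSum_apply,
    sum_eq_single_of_mem i hi]
  · have hle := (ha.1 i hi).2.natFactorization_le_one q
    have hpos := hq.factorization_pos_of_dvd (ha0 i hi) hqa
    simp only [Nat.factorization_pow, Finsupp.smul_apply, smul_eq_mul]
    rw [show (a i).factorization q = 1 by omega, mul_one]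
  · intro j hj hji
    have hqj : ¬ q ∣ a j := fun hqj =>
      hq.one_lt.ne' (Nat.eq_one_of_dvd_coprimes (ha.2 i hi j hj hji.symm) hqa hqj)
    simp [Nat.factorization_eq_zero_of_not_dvd hqj]

theorem exists_not_dvd_factorization (ha : StronglyCarefree p a)
    (hm : 1 < ∏ i ∈ Icc 1 (p - 1), a i ^ i) :
    ∃ q, ¬ p ∣ (∏ i ∈ Icc 1 (p - 1), a i ^ i).factorization q := by
  obtain ⟨i, hi, hai⟩ : ∃ i ∈ Icc 1 (p - 1), a i ≠ 1 := by
    by_contra! h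
    rw [prod_eq_one fun i hi => by rw [h i hi, one_pow]] at hm
    exact hm.false
  obtain ⟨q, hq, hqa⟩ := Nat.exists_prime_and_dvd hai
  have hi' := mem_Icc.mp hi
  refine ⟨q, ?_⟩
  rw [ha.factorization_prod_pow hi hq hqa]
  exact Nat.not_dvd_of_pos_of_lt (by omega) (by omega)

theorem irreducible_X_pow_sub_C (ha : StronglyCarefree p a) (hp : p.Prime)
    (hm : 1 < ∏ i ∈ Icc 1 (p - 1), a i ^ i) :
    Irreducible (X ^ p - C ((∏ i ∈ Icc 1 (p - 1), a i ^ i : ℕ) : ℚ)) :=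
  X_pow_sub_C_irreducible_of_prime hp fun b =>
    have ⟨_, hq⟩ := ha.exists_not_dvd_factorization hm
    Rat.pow_ne_natCast_of_not_dvd_factorization hp.pos hq b

end StronglyCarefree

theorem Finset.sum_range_eq_add_sum_Icc {M : Type*} [AddCommMonoid M] (f : ℕ → M) {n : ℕ}
    (hn : n ≠ 0) : ∑ i ∈ range n, f i = f 0 + ∑ i ∈ Icc 1 (n - 1), f i := by
  rw [sum_range_eq_add_Ico _ (Nat.pos_of_ne_zero hn),
    Icc_sub_one_right_eq_Ico_of_not_isMin (by simpa using hn)]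

theorem IsPrimitiveRoot.sum_pow_mul_conj_pow {n : ℕ} {ζ : ℂ} (hζ : IsPrimitiveRoot ζ n)
    {i j : ℕ} (hi : i < n) (hj : j < n) :
    ∑ k ∈ range n, ζ ^ (i * k) * conj (ζ ^ (j * k)) = if i = j then (n : ℂ) else 0 := by
  have hn : n ≠ 0 := by omega
  have hconj : conj ζ = ζ⁻¹ :=
    (Complex.inv_eq_conj (Complex.norm_eq_one_of_pow_eq_one hζ.pow_eq_one hn)).symm
  set w := ζ ^ i * (ζ ^ j)⁻¹
  have hterm : ∀ k, ζ ^ (i * k) * conj (ζ ^ (j * k)) = w ^ k := fun k => by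
    rw [map_pow, hconj, mul_pow, pow_mul, pow_mul, inv_pow, inv_pow, ← pow_mul, ← pow_mul]
  simp only [hterm]
  split_ifs with hij
  · simp [w, hij, hζ.ne_zero hn]
  · have hw1 : w ≠ 1 := fun h => hij (hζ.pow_inj hi hj (by
      rwa [mul_inv_eq_one₀ (pow_ne_zero _ (hζ.ne_zero hn))] at h))
    have hwn : w ^ n = 1 := by
      rw [mul_pow, inv_pow, ← pow_mul, ← pow_mul, mul_comm i, mul_comm j, pow_mul, pow_mul,
        hζ.pow_eq_one, one_pow, one_pow, inv_one, mul_one]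
    rw [geom_sum_eq hw1, hwn, sub_self, zero_div]

theorem IsPrimitiveRoot.sum_mul_conj_eq {n : ℕ} {ζ : ℂ} (hζ : IsPrimitiveRoot ζ n)
    (c d : ℕ → ℂ) :
    ∑ k ∈ range n, (∑ i ∈ range n, c i * ζ ^ (i * k)) * conj (∑ i ∈ range n, d i * ζ ^ (i * k)) =
      n * ∑ i ∈ range n, c i * conj (d i) := by
  calc _ = ∑ i ∈ range n, ∑ j ∈ range n,
        c i * conj (d j) * ∑ k ∈ range n, ζ ^ (i * k) * conj (ζ ^ (j * k)) := by
        simp_rw [map_sum, map_mul, sum_mul_sum, mul_sum]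
        rw [sum_comm]
        refine sum_congr rfl fun i _ => ?_
        rw [sum_comm]
        refine sum_congr rfl fun j _ => sum_congr rfl fun k _ => by ring
    _ = n * ∑ i ∈ range n, c i * conj (d i) := by
        rw [mul_sum]
        refine sum_congr rfl fun i hi => ?_
        rw [sum_eq_single_of_mem i hi fun j hj hji => by
          rw [hζ.sum_pow_mul_conj_pow (mem_range.mp hi) (mem_range.mp hj), if_neg hji.symm,
            mul_zero]]
        rw [hζ.sum_pow_mul_conj_pow (mem_range.mp hi) (mem_range.mp hi), if_pos rfl]
        ring

theorem IntermediateField.exists_equiv_ringHom_adjoin_apply_gen {L : Type*} [Field L]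
    [CharZero L] {α : L} [NumberField ℚ⟮α⟯] {p : ℕ} {m : ℚ} (hmin : minpoly ℚ α = X ^ p - C m)
    {ζ β : ℂ} (hζ : IsPrimitiveRoot ζ p) (hβ : β ^ p = m) (hβ0 : β ≠ 0) :
    ∃ e : Fin p ≃ (ℚ⟮α⟯ →+* ℂ), ∀ k, e k (AdjoinSimple.gen ℚ α) = ζ ^ (k : ℕ) * β := by
  have hα : IsIntegral ℚ α :=
    (AdjoinSimple.isIntegral_gen ℚ α).mp (Algebra.IsIntegral.isIntegral _)
  let pb := adjoin.powerBasis hα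
  have hgen : pb.gen = AdjoinSimple.gen ℚ α := adjoin.powerBasis_gen hα
  have hroot : ∀ k : Fin p, aeval (ζ ^ (k : ℕ) * β) (minpoly ℚ pb.gen) = 0 := fun k => by
    -- `rw [minpoly_gen]` misses: `pb` carries a different, defeq `ℚ`-algebra on `ℚ⟮α⟯`
    rw [hgen, show minpoly ℚ (AdjoinSimple.gen ℚ α) = minpoly ℚ α from minpoly_gen ℚ α, hmin]
    simp [mul_pow, ← pow_mul, pow_mul', hζ.pow_eq_one, hβ]
  let emb : Fin p → (ℚ⟮α⟯ →+* ℂ) := fun k => (pb.lift _ (hroot k)).toRingHom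
  have hemb : ∀ k, emb k (AdjoinSimple.gen ℚ α) = ζ ^ (k : ℕ) * β := fun k => by
    rw [← hgen]; exact pb.lift_gen _ (hroot k)
  have hinj : Function.Injective emb := fun k k' h => Fin.ext <|
    hζ.pow_inj k.2 k'.2 <| mul_right_cancel₀ hβ0 <| by rw [← hemb, ← hemb, h]
  refine ⟨Equiv.ofBijective emb ((Fintype.bijective_iff_injective_and_card _).mpr ⟨hinj, ?_⟩),
    hemb⟩
  rw [Fintype.card_fin, NumberField.Embeddings.card, adjoin.finrank hα, hmin,
    natDegree_X_pow_sub_C]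

theorem IntermediateField.sum_ringHom_mul_conj_eq {α : ℝ} [NumberField ℚ⟮α⟯] {p : ℕ} {m : ℚ}
    (hmin : minpoly ℚ α = X ^ p - C m) (hα : α ≠ 0) (c d : ℕ → ℚ) :
    ∑ σ : ℚ⟮α⟯ →+* ℂ, σ (∑ i ∈ range p, c i • AdjoinSimple.gen ℚ α ^ i) *
        conj (σ (∑ i ∈ range p, d i • AdjoinSimple.gen ℚ α ^ i)) =
      p * ∑ i ∈ range p, (c i * d i : ℚ) * (α : ℂ) ^ (2 * i) := by
  have hp : p ≠ 0 := by
    have := minpoly.natDegree_pos ((AdjoinSimple.isIntegral_gen ℚ α).mp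
      (Algebra.IsIntegral.isIntegral _))
    rw [hmin, natDegree_X_pow_sub_C] at this
    omega
  have hαm : (α : ℂ) ^ p = m := by
    have := minpoly.aeval ℚ α
    rw [hmin] at this
    simp only [map_sub, map_pow, aeval_X, aeval_C, sub_eq_zero] at this
    exact_mod_cast this
  obtain ⟨ζ, hζ⟩ : ∃ ζ : ℂ, IsPrimitiveRoot ζ p := ⟨_, Complex.isPrimitiveRoot_exp p hp⟩
  obtain ⟨e, he⟩ := exists_equiv_ringHom_adjoin_apply_gen hmin hζ hαm (by exact_mod_cast hα)
  have happly : ∀ (c : ℕ → ℚ) (k : Fin p), e k (∑ i ∈ range p, c i • AdjoinSimple.gen ℚ α ^ i) =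
      ∑ i ∈ range p, (c i * (α : ℂ) ^ i) * ζ ^ (i * k) := fun c k => by
    simp only [map_sum, Rat.smul_def, map_mul, map_ratCast, map_pow, he, mul_pow, ← pow_mul,
      mul_comm (k : ℕ)]
    exact sum_congr rfl fun i _ => by ring
  rw [← e.sum_comp]
  simp only [happly]
  rw [Fin.sum_univ_eq_sum_range (fun k => (∑ i ∈ range p, (c i * (α : ℂ) ^ i) * ζ ^ (i * k)) *
    conj (∑ i ∈ range p, (d i * (α : ℂ) ^ i) * ζ ^ (i * k))), hζ.sum_mul_conj_eq]
  push_cast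
  simp only [map_mul, map_pow, Complex.conj_ofReal, map_ratCast]
  congr 1
  exact sum_congr rfl fun i _ => by ring

theorem IntermediateField.sum_ringHom_mul_conj_smul_gen_pow {α : ℝ} [NumberField ℚ⟮α⟯] {p : ℕ}
    {m : ℚ} (hmin : minpoly ℚ α = X ^ p - C m) (hα : α ≠ 0) (c : ℕ → ℚ) (q : ℚ) {j : ℕ}
    (hj : j < p) :
    ∑ σ : ℚ⟮α⟯ →+* ℂ, σ (∑ i ∈ range p, c i • AdjoinSimple.gen ℚ α ^ i) *
        conj (σ (q • AdjoinSimple.gen ℚ α ^ j)) = p * (c j * q : ℚ) * (α : ℂ) ^ (2 * j) := by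
  have hq : q • AdjoinSimple.gen ℚ α ^ j =
      ∑ i ∈ range p, (if i = j then q else 0) • AdjoinSimple.gen ℚ α ^ i := by
    simp [ite_smul, mem_range.mpr hj]
  rw [hq, sum_ringHom_mul_conj_eq hmin hα, mul_assoc,
    sum_eq_single_of_mem j (mem_range.mpr hj) fun i _ hij => by simp [hij]]
  simp

theorem IntermediateField.sum_ringHom_eq {α : ℝ} [NumberField ℚ⟮α⟯] {p : ℕ} {m : ℚ}
    (hmin : minpoly ℚ α = X ^ p - C m) (hα : α ≠ 0) (c : ℕ → ℚ) :
    ∑ σ : ℚ⟮α⟯ →+* ℂ, σ (∑ i ∈ range p, c i • AdjoinSimple.gen ℚ α ^ i) = p * c 0 := by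
  rcases p.eq_zero_or_pos with rfl | hp
  · simp
  · simpa using sum_ringHom_mul_conj_smul_gen_pow hmin hα c 1 hp

/-- The coordinates of `(m + ∑_{i=1}^{p-1} ε^(i-1) x^i) / p` in the basis `1, x, …, x^(p-1)`. -/
def nuCoeff (p m : ℕ) (ε : ℤ) (i : ℕ) : ℚ :=
  (if i = 0 then (m : ℚ) else (ε : ℚ) ^ (i - 1)) / p

theorem nuCoeff_of_mem_Icc {p m : ℕ} {ε : ℤ} {i : ℕ} (hi : i ∈ Icc 1 (p - 1)) :
    nuCoeff p m ε i = (ε : ℚ) ^ (i - 1) / p := by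
  simp only [nuCoeff, if_neg (Nat.pos_iff_ne_zero.mp (mem_Icc.mp hi).1)]

section nuCoeff

variable {R : Type*} [Field R] [CharZero R] {p : ℕ} (m : ℕ) (ε : ℤ)

theorem sum_range_nuCoeff_smul_pow (hp : p ≠ 0) (x : R) :
    ∑ i ∈ range p, nuCoeff p m ε i • x ^ i =
      (m + ∑ i ∈ Icc 1 (p - 1), (ε : R) ^ (i - 1) * x ^ i) / p := by
  rw [sum_range_eq_add_sum_Icc _ hp, sum_congr rfl fun i hi => by rw [nuCoeff_of_mem_Icc hi]]
  simp [nuCoeff, Rat.smul_def, add_div, sum_div, div_mul_eq_mul_div]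

theorem natCast_mul_sum_nuCoeff_mul_self (hp : p ≠ 0) (x : R) :
    p * ∑ i ∈ range p, ((nuCoeff p m ε i * nuCoeff p m ε i : ℚ) : R) * x ^ (2 * i) =
      (m ^ 2 + ∑ i ∈ Icc 1 (p - 1), (ε : R) ^ (2 * (i - 1)) * x ^ (2 * i)) / p := by
  rw [sum_range_eq_add_sum_Icc _ hp, sum_congr rfl fun i hi => by rw [nuCoeff_of_mem_Icc hi],
    mul_add, mul_sum, add_div, sum_div]
  push_cast
  congr 1
  · simp [nuCoeff]
    field_simp
  · exact sum_congr rfl fun i _ => by field_simp; ring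

end nuCoeff

theorem gram_entries_nu_pure_prime_degree_tame_general
    (p : ℕ) (hp : p.Prime)
    (a : ℕ → ℕ) (ha : StronglyCarefree p a)
    (m : ℕ) (hm : m = ∏ i ∈ Finset.Icc 1 (p - 1), a i ^ i) (hm1 : 1 < m)
    (α : ℝ) (hαpos : 0 < α) (hαp : α ^ p = (m : ℝ))
    (γ : ℕ → ℝ)
    (hγ : ∀ j, γ j = α ^ j / ∏ i ∈ Finset.Icc 1 (p - 1), (a i : ℝ) ^ (i * j / p))
    (ε : ℤ)
    (ν : ℝ)
    (hν : ν = ((m : ℝ) + ∑ i ∈ Finset.Icc 1 (p - 1), (ε : ℝ) ^ (i - 1) * α ^ i) / p)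
    (ν' : ℝ)
    (hν' : ν' = ((m : ℝ) ^ 2 +
        ∑ i ∈ Finset.Icc 1 (p - 1), (ε : ℝ) ^ (2 * (i - 1)) * γ 1 ^ (2 * i)) / p)
    (K : IntermediateField ℚ ℝ) [NumberField K]
    (hK : K = IntermediateField.adjoin ℚ {α})
    (hγK : ∀ j, γ j ∈ K) (hνK : ν ∈ K) :
    (∑ σ : K →+* ℂ, σ ⟨ν, hνK⟩ * (starRingEnd ℂ) (σ ⟨ν, hνK⟩) = ((ν' : ℝ) : ℂ)) ∧
    (∑ σ : K →+* ℂ, σ ⟨ν, hνK⟩ = ((m : ℕ) : ℂ)) ∧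
    (∀ j ∈ Finset.Icc 2 (p - 1),
      ∑ σ : K →+* ℂ, σ ⟨ν, hνK⟩ * (starRingEnd ℂ) (σ ⟨γ j, hγK j⟩) =
        (((ε : ℝ) ^ (j - 1) * γ j * γ 1 ^ j : ℝ) : ℂ)) := by
  subst hK
  have hmin : minpoly ℚ α = X ^ p - C (m : ℚ) := by
    subst hm
    exact (minpoly.eq_of_irreducible_of_monic (ha.irreducible_X_pow_sub_C hp hm1)
      (by simp [hαp]) (monic_X_pow_sub_C _ hp.ne_zero)).symm
  have hγ1 : γ 1 = α := by
    rw [hγ, prod_eq_one fun i hi => by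
      rw [Nat.div_eq_of_lt (by have := mem_Icc.mp hi; omega), pow_zero], div_one, pow_one]
  have hνc : (⟨ν, hνK⟩ : ℚ⟮α⟯) = ∑ i ∈ range p, nuCoeff p m ε i • AdjoinSimple.gen ℚ α ^ i :=
    Subtype.ext <| by simp [hν, ← sum_range_nuCoeff_smul_pow m ε hp.ne_zero]
  refine ⟨?_, ?_, fun j hj => ?_⟩
  · rw [hνc, sum_ringHom_mul_conj_eq hmin hαpos.ne',
      natCast_mul_sum_nuCoeff_mul_self m ε hp.ne_zero, hν', hγ1]
    simp
  · rw [hνc, sum_ringHom_eq hmin hαpos.ne']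
    simp [nuCoeff, mul_div_cancel₀, hp.ne_zero]
  · have hj' : j ∈ Icc 1 (p - 1) := by simp only [mem_Icc] at hj ⊢; omega
    set q : ℚ := (∏ i ∈ Icc 1 (p - 1), (a i : ℚ) ^ (i * j / p))⁻¹
    have hγc : (⟨γ j, hγK j⟩ : ℚ⟮α⟯) = q • AdjoinSimple.gen ℚ α ^ j :=
      Subtype.ext (by simp [q, hγ, Rat.smul_def, div_eq_inv_mul])
    rw [hνc, hγc, sum_ringHom_mul_conj_smul_gen_pow hmin hαpos.ne' _ q (by simp at hj'; omega),
      nuCoeff_of_mem_Icc hj', hγ, hγ1]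
    push_cast [q]
    field_simp [hp.ne_zero]
    ring

/-- Hermitian inner products involving `ν = (1/p)(m + ∑_{i=1}^{p−1} ε^(i−1) α^i)` in the
tamely ramified case: summing over all `p` complex embeddings `σ` of `K = ℚ(α)`,
(a) `∑ σ(ν)·conj(σ(ν)) = ν′`, (b) `∑ σ(ν) = m`, and
(c) `∑ σ(ν)·conj(σ(γ j)) = ε^(j−1)·γ j·(γ 1)^j` for `2 ≤ j ≤ p−1`. -/
theorem gram_entries_nu_pure_prime_degree_tame
    (p : ℕ) (hp : p.Prime) (hodd : Odd p)
    (a : ℕ → ℕ) (ha : StronglyCarefree p a)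
    (m : ℕ) (hm : m = ∏ i ∈ Finset.Icc 1 (p - 1), a i ^ i) (hm1 : 1 < m)
    (α : ℝ) (hαpos : 0 < α) (hαp : α ^ p = (m : ℝ))
    (γ : ℕ → ℝ)
    (hγ : ∀ j, γ j = α ^ j / ∏ i ∈ Finset.Icc 1 (p - 1), (a i : ℝ) ^ (i * j / p))
    (htame : p ^ 2 ∣ m ^ (p - 1) - 1)
    (ε : ℤ) (hε : (p : ℤ) ^ 2 ∣ ε * (m : ℤ) - 1)
    (ν : ℝ)
    (hν : ν = ((m : ℝ) + ∑ i ∈ Finset.Icc 1 (p - 1), (ε : ℝ) ^ (i - 1) * α ^ i) / p)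
    (ν' : ℝ)
    (hν' : ν' = ((m : ℝ) ^ 2 +
        ∑ i ∈ Finset.Icc 1 (p - 1), (ε : ℝ) ^ (2 * (i - 1)) * γ 1 ^ (2 * i)) / p)
    (K : IntermediateField ℚ ℝ) [NumberField K]
    (hK : K = IntermediateField.adjoin ℚ {α})
    (hγK : ∀ j, γ j ∈ K) (hνK : ν ∈ K) :
    (∑ σ : K →+* ℂ, σ ⟨ν, hνK⟩ * (starRingEnd ℂ) (σ ⟨ν, hνK⟩) = ((ν' : ℝ) : ℂ)) ∧
    (∑ σ : K →+* ℂ, σ ⟨ν, hνK⟩ = ((m : ℕ) : ℂ)) ∧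
    (∀ j ∈ Finset.Icc 2 (p - 1),
      ∑ σ : K →+* ℂ, σ ⟨ν, hνK⟩ * (starRingEnd ℂ) (σ ⟨γ j, hγK j⟩) =
        (((ε : ℝ) ^ (j - 1) * γ j * γ 1 ^ j : ℝ) : ℂ)) :=
  gram_entries_nu_pure_prime_degree_tame_general p hp a ha m hm hm1 α hαpos hαp γ hγ ε ν hν ν' hν' K
    hK hγK hνK
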